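/- arXiv:1901.10589 — 3 statements merged into one kernel-verified Lean document; each statement's English description precedes it below -/
import Mathlib

section
/- If 0 < r < 1, μ > 0, t' > 0, and μ > (1/r)·(t' - t₀)·t₀^{1-r} where t₀ = ((1-r)/(2-r))·t', then g_r(t) = μr - t'·t^{1-r} + t^{2-r} > 0 for all t > 0, so g_r has no zeros on (0, ∞). -/
/-!
Write `g_r(t) = μ r - t^(1-r) (t' - t)`. The function `t ↦ t^(1-r) (t' - t)` attains its maximum
`(t' - t₀) t₀^(1-r)` on `[0, ∞)` at `t₀`, and the hypothesis says exactly that `μ r` exceeds this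
maximum. The maximum bound follows from Bernoulli's inequality `(1 + u)^a ≤ 1 + a u` (`0 ≤ a ≤ 1`)
applied at `t = t₀ (1 + u)`.
-/

open Real

theorem rpow_mul_sub_le {a m t : ℝ} (ha : 0 < a) (ha1 : a ≤ 1) (hm : 0 < m) (ht : 0 ≤ t) :
    t ^ a * (m + m / a - t) ≤ m ^ a * (m / a) := by
  have hRHS : 0 ≤ m ^ a * (m / a) := by positivity
  rcases le_or_gt (m + m / a - t) 0 with hneg | hpos
  · exact (mul_nonpos_of_nonneg_of_nonpos (by positivity) hneg).trans hRHS
  set u := t / m - 1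
  have hu : -1 ≤ u := by simp only [u]; linarith [div_nonneg ht hm.le]
  have ht_eq : t = m * (1 + u) := by simp only [u]; field_simp; ring
  have hbernoulli : (1 + u) ^ a ≤ 1 + a * u := rpow_one_add_le_one_add_mul_self hu ha.le ha1
  calc t ^ a * (m + m / a - t)
      = m ^ a * ((1 + u) ^ a * (m + m / a - t)) := by
        rw [ht_eq, mul_rpow hm.le (by linarith)]; ring
    _ ≤ m ^ a * ((1 + a * u) * (m + m / a - t)) := by gcongr
    _ = m ^ a * (m / a * (1 - (a * u) ^ 2)) := by rw [ht_eq]; field_simp; ring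
    _ ≤ m ^ a * (m / a) := by
        gcongr
        nlinarith [sq_nonneg (a * u), div_pos hm ha]

theorem stmt_5_general (r μ t' : ℝ) (hr : 0 < r) (hr1 : r < 1) (ht' : 0 < t')
    (h : μ > (1 / r) * (t' - ((1 - r) / (2 - r)) * t') *
        (((1 - r) / (2 - r)) * t') ^ (1 - r)) :
    ∀ t : ℝ, 0 < t → 0 < μ * r - t' * t ^ (1 - r) + t ^ (2 - r) := by
  intro t ht
  have h1r : 0 < 1 - r := by linarith
  have h2r : 0 < 2 - r := by linarith
  set t₀ := (1 - r) / (2 - r) * t'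
  have ht₀ : 0 < t₀ := by positivity
  have hgap : t' - t₀ = t₀ / (1 - r) := by
    simp only [t₀]; field_simp; ring
  have hmax : t ^ (1 - r) * (t' - t) ≤ t₀ ^ (1 - r) * (t' - t₀) := by
    have := rpow_mul_sub_le h1r (by linarith) ht₀ ht.le
    rwa [← hgap, add_sub_cancel] at this
  have hμr : (t' - t₀) * t₀ ^ (1 - r) < μ * r :=
    calc (t' - t₀) * t₀ ^ (1 - r) = 1 / r * (t' - t₀) * t₀ ^ (1 - r) * r := by field_simp
      _ < μ * r := mul_lt_mul_of_pos_right h hr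
  have hsplit : t ^ (2 - r) = t ^ (1 - r) * t := by
    rw [show 2 - r = (1 - r) + 1 by ring, rpow_add_one ht.ne']
  rw [hsplit]
  linarith

/-- If `μ > (1/r)(t' - t₀) t₀^(1-r)` with `t₀ = ((1-r)/(2-r)) t'`, then
`g_r(t) > 0` for all `t > 0`, so `g_r` has no zeros on `(0, ∞)`. -/
theorem stmt_5 (r μ t' : ℝ) (hr : 0 < r) (hr1 : r < 1) (hμ : 0 < μ) (ht' : 0 < t')
    (h : μ > (1 / r) * (t' - ((1 - r) / (2 - r)) * t') *
        (((1 - r) / (2 - r)) * t') ^ (1 - r)) :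
    ∀ t : ℝ, 0 < t → 0 < μ * r - t' * t ^ (1 - r) + t ^ (2 - r) :=
  stmt_5_general r μ t' hr hr1 ht' h
end

section
/- If 0 < r < 1, μ > 0, t' > 0, and μ < (1/r)·(t' - t₀)·t₀^{1-r} where t₀ = ((1-r)/(2-r))·t', then g_r(t) = μr - t'·t^{1-r} + t^{2-r} has exactly two zeros on (0, ∞): one in (0, t₀) and one in (t₀, t'). -/
/-!
The function `g_r` is strictly convex on `[0, ∞)`, being the strictly convex `t ^ (2 - r)` minus
a nonnegative multiple of the concave `t ^ (1 - r)`. It equals `μ r > 0` at `0` and at `t'`, and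
since `g_r t = μ r - (t' - t) t ^ (1 - r)`, the hypothesis on `μ` says exactly that `g_r t₀ < 0`.
The intermediate value theorem gives a zero on each side of `t₀`, and a strictly convex function
cannot vanish at three points.
-/

open Real Set

section StrictConvexOn

variable {𝕜 β : Type*} [Field 𝕜] [LinearOrder 𝕜] [IsStrictOrderedRing 𝕜] [AddCommMonoid β]
  [LinearOrder β] [IsOrderedAddMonoid β] [Module 𝕜 β] [PosSMulStrictMono 𝕜 β]
  {s : Set 𝕜} {f : 𝕜 → β}

theorem StrictConvexOn.lt_max_of_lt_of_lt (hf : StrictConvexOn 𝕜 s f) {x y z : 𝕜} (hx : x ∈ s)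
    (hz : z ∈ s) (hxy : x < y) (hyz : y < z) : f y < max (f x) (f z) :=
  hf.lt_on_openSegment hx hz (hxy.trans hyz).ne <| by
    rw [openSegment_eq_Ioo (hxy.trans hyz)]
    exact ⟨hxy, hyz⟩

theorem StrictConvexOn.eq_or_eq_of_apply_eq (hf : StrictConvexOn 𝕜 s f) {x₁ x₂ x : 𝕜}
    (hx₁ : x₁ ∈ s) (hx₂ : x₂ ∈ s) (hx : x ∈ s) (h₁₂ : x₁ < x₂) (h₁ : f x₁ = f x)
    (h₂ : f x₂ = f x) : x = x₁ ∨ x = x₂ := by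
  by_contra! hne
  rcases lt_or_gt_of_ne hne.1 with hx_lt | hx₁_lt
  · have := hf.lt_max_of_lt_of_lt hx hx₂ hx_lt h₁₂
    simp [h₁, h₂] at this
  rcases lt_or_gt_of_ne hne.2 with hx_lt | hx₂_lt
  · have := hf.lt_max_of_lt_of_lt hx₁ hx₂ hx₁_lt hx_lt
    simp [h₁, h₂] at this
  · have := hf.lt_max_of_lt_of_lt hx₁ hx h₁₂ hx₂_lt
    simp [h₁, h₂] at this

end StrictConvexOn

theorem StrictConvexOn.exists_two_zeros {f : ℝ → ℝ} {s : Set ℝ} {a b c : ℝ}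
    (hf : StrictConvexOn ℝ s f) (hcont : ContinuousOn f (Icc a c)) (ha : a ∈ s) (hc : c ∈ s)
    (hab : a ≤ b) (hbc : b ≤ c) (hfa : 0 < f a) (hfb : f b < 0) (hfc : 0 < f c) :
    ∃ x₁ ∈ Ioo a b, ∃ x₂ ∈ Ioo b c, f x₁ = 0 ∧ f x₂ = 0 ∧
      ∀ x ∈ s, f x = 0 → x = x₁ ∨ x = x₂ := by
  obtain ⟨x₁, hx₁, hfx₁⟩ :=
    intermediate_value_Ioo' hab (hcont.mono (Icc_subset_Icc_right hbc)) ⟨hfb, hfa⟩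
  obtain ⟨x₂, hx₂, hfx₂⟩ :=
    intermediate_value_Ioo hbc (hcont.mono (Icc_subset_Icc_left hab)) ⟨hfb, hfc⟩
  have hIcc : Icc a c ⊆ s := hf.1.ordConnected.out ha hc
  refine ⟨x₁, hx₁, x₂, hx₂, hfx₁, hfx₂, fun x hx hfx => ?_⟩
  exact hf.eq_or_eq_of_apply_eq (hIcc ⟨hx₁.1.le, hx₁.2.le.trans hbc⟩)
    (hIcc ⟨hab.trans hx₂.1.le, hx₂.2.le⟩) hx (hx₁.2.trans hx₂.1) (hfx₁.trans hfx.symm)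
    (hfx₂.trans hfx.symm)

noncomputable def gr (r μ t' t : ℝ) : ℝ := μ * r - t' * t ^ (1 - r) + t ^ (2 - r)

section gr

variable {r μ t' : ℝ}

theorem strictConvexOn_gr (hr0 : 0 ≤ r) (hr1 : r < 1) (ht' : 0 ≤ t') :
    StrictConvexOn ℝ (Ici 0) (gr r μ t') := by
  refine (((strictConvexOn_rpow (p := 2 - r) (by linarith)).sub_concaveOn
    ((concaveOn_rpow (p := 1 - r) (by linarith) (by linarith)).smul ht')).add_const (μ * r)).congr
    fun t _ => ?_
  simp only [gr, Pi.add_apply, Pi.sub_apply, smul_eq_mul]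
  ring

theorem continuous_gr (hr1 : r ≤ 1) : Continuous (gr r μ t') :=
  (continuous_const.sub (continuous_const.mul (continuous_rpow_const (by linarith)))).add
    (continuous_rpow_const (by linarith))

theorem gr_zero (hr1 : r < 1) : gr r μ t' 0 = μ * r := by
  simp [gr, zero_rpow (by linarith : (1 : ℝ) - r ≠ 0), zero_rpow (by linarith : (2 : ℝ) - r ≠ 0)]

theorem gr_eq_sub_mul {t : ℝ} (ht : 0 < t) : gr r μ t' t = μ * r - (t' - t) * t ^ (1 - r) := by
  rw [gr, show (2 : ℝ) - r = 1 + (1 - r) by ring, rpow_add ht, rpow_one]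
  ring

theorem gr_self (ht' : 0 < t') : gr r μ t' t' = μ * r := by
  rw [gr_eq_sub_mul ht', sub_self, zero_mul, sub_zero]

theorem gr_neg_iff {t : ℝ} (hr : 0 < r) (ht : 0 < t) :
    gr r μ t' t < 0 ↔ μ < 1 / r * (t' - t) * t ^ (1 - r) := by
  rw [gr_eq_sub_mul ht, sub_neg, mul_assoc, one_div, lt_inv_mul_iff₀ hr, mul_comm]

end gr

/-- If `μ < (1/r)(t' - t₀) t₀^(1-r)` with `t₀ = ((1-r)/(2-r)) t'`, then
`g_r` has exactly two zeros on `(0, ∞)`: one in `(0, t₀)` and one in `(t₀, t')`. -/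
theorem stmt_6 (r μ t' : ℝ) (hr : 0 < r) (hr1 : r < 1) (hμ : 0 < μ) (ht' : 0 < t')
    (h : μ < (1 / r) * (t' - ((1 - r) / (2 - r)) * t') *
        (((1 - r) / (2 - r)) * t') ^ (1 - r)) :
    ∃ t₁ ∈ Set.Ioo (0 : ℝ) (((1 - r) / (2 - r)) * t'),
      ∃ t₂ ∈ Set.Ioo (((1 - r) / (2 - r)) * t') t',
        μ * r - t' * t₁ ^ (1 - r) + t₁ ^ (2 - r) = 0 ∧
        μ * r - t' * t₂ ^ (1 - r) + t₂ ^ (2 - r) = 0 ∧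
        ∀ t : ℝ, 0 < t → μ * r - t' * t ^ (1 - r) + t ^ (2 - r) = 0 →
          t = t₁ ∨ t = t₂ := by
  set t₀ := (1 - r) / (2 - r) * t'
  have h2r : 0 < 2 - r := by linarith
  have ht₀ : 0 < t₀ := mul_pos (div_pos (by linarith) h2r) ht'
  have ht₀t' : t₀ < t' := mul_lt_of_lt_one_left ht' ((div_lt_one h2r).2 (by linarith))
  obtain ⟨t₁, ht₁, t₂, ht₂, h₁, h₂, hzeros⟩ :=
    (strictConvexOn_gr hr.le hr1 ht'.le).exists_two_zeros (continuous_gr hr1.le).continuousOn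
      self_mem_Ici ht'.le ht₀.le ht₀t'.le (by rw [gr_zero hr1]; positivity)
      ((gr_neg_iff hr ht₀).2 h) (by rw [gr_self ht']; positivity)
  exact ⟨t₁, ht₁, t₂, ht₂, h₁, h₂, fun t ht => hzeros t ht.le⟩
end

section
/- If 0 < r < 1, μ > 0, t' > 0, and μ ≥ (1/r)·(t' - t₀)·t₀^{1-r} with t₀ = ((1-r)/(2-r))·t', then E_r(t) = μ·t^r + (1/2)(t - t')² is nondecreasing on [0, ∞), and hence t = 0 is a global minimizer of E_r on [0, ∞). -/
/-!
Where `t > 0`, the derivative of `E_r` is `μ r t^(r-1) + t - t'`, so it is nonnegative exactly when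
`(t' - t) t^(1-r) ≤ μ r`. The left side is maximal at `t = t₀`: writing `t = x t₀` and `s = 1 - r`,
it equals `(t' - t₀) t₀^s · (1 + s (1 - x)) x^s`, and Bernoulli's inequality `x^s ≤ 1 + s (x - 1)`
bounds the last factor by `1 - s² (x - 1)² ≤ 1`. The hypothesis on `μ` is precisely
`(t' - t₀) t₀^(1-r) ≤ μ r`, so `E_r` is monotone, and `t = 0` minimizes it.
-/

open Real Set

lemma one_add_mul_one_sub_mul_rpow_le_one {s x : ℝ} (hs0 : 0 ≤ s) (hs1 : s ≤ 1) (hx : 0 ≤ x) :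
    (1 + s * (1 - x)) * x ^ s ≤ 1 := by
  have hxs : 0 ≤ x ^ s := rpow_nonneg hx s
  rcases le_or_gt (1 + s * (1 - x)) 0 with hneg | hpos
  · nlinarith
  have hbernoulli : x ^ s ≤ 1 + s * (x - 1) := by
    simpa using rpow_one_add_le_one_add_mul_self (s := x - 1) (by linarith) hs0 hs1
  calc (1 + s * (1 - x)) * x ^ s ≤ (1 + s * (1 - x)) * (1 + s * (x - 1)) := by gcongr
    _ = 1 - s ^ 2 * (x - 1) ^ 2 := by ring
    _ ≤ 1 := by nlinarith

lemma sub_mul_rpow_one_sub_le {r a t : ℝ} (hr0 : 0 ≤ r) (hr1 : r < 1) (ha : 0 < a) (ht : 0 ≤ t) :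
    (a - t) * t ^ (1 - r) ≤
      (a - (1 - r) / (2 - r) * a) * ((1 - r) / (2 - r) * a) ^ (1 - r) := by
  have h1r : 0 < 1 - r := by linarith
  have h2r : 0 < 2 - r := by linarith
  set c := (1 - r) / (2 - r) * a
  have hc : 0 < c := by positivity
  set x := t / c
  have hmax : 0 < (a - c) * c ^ (1 - r) := by
    have : a - c = a / (2 - r) := by simp only [c]; field_simp; ring
    rw [this]; positivity
  have hsub : a - t = (a - c) * (1 + (1 - r) * (1 - x)) := by
    simp only [x, c]; field_simp; ring
  have hpow : t ^ (1 - r) = c ^ (1 - r) * x ^ (1 - r) := by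
    rw [← mul_rpow hc.le (by positivity), mul_div_cancel₀ t hc.ne']
  calc (a - t) * t ^ (1 - r)
      = (a - c) * c ^ (1 - r) * ((1 + (1 - r) * (1 - x)) * x ^ (1 - r)) := by
        rw [hsub, hpow]; ring
    _ ≤ (a - c) * c ^ (1 - r) * 1 := by
        gcongr
        exact one_add_mul_one_sub_mul_rpow_le_one h1r.le (by linarith) (by positivity)
    _ = (a - c) * c ^ (1 - r) := mul_one _

lemma monotoneOn_mul_rpow_add_half_sq {μ r a : ℝ} (hr : 0 ≤ r)
    (hslope : ∀ t, 0 < t → (a - t) * t ^ (1 - r) ≤ μ * r) :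
    MonotoneOn (fun t : ℝ => μ * t ^ r + 1 / 2 * (t - a) ^ 2) (Ici 0) := by
  refine monotoneOn_of_hasDerivWithinAt_nonneg (f' := fun t => μ * (r * t ^ (r - 1)) + (t - a))
    (convex_Ici 0) (by fun_prop (disch := exact hr)) (fun t ht => ?_) (fun t ht => ?_)
  all_goals rw [interior_Ici] at ht
  · have hsq : HasDerivAt (fun t : ℝ => 1 / 2 * (t - a) ^ 2) (t - a) t := by
      simpa using (((hasDerivAt_id t).sub_const a).pow 2).const_mul (1 / 2 : ℝ)
    exact (((hasDerivAt_rpow_const (Or.inl (ne_of_gt ht))).const_mul μ).add hsq).hasDerivWithinAt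
  · have hcancel : t ^ (1 - r) * t ^ (r - 1) = 1 := by
      rw [← rpow_add ht]; norm_num
    have := mul_le_mul_of_nonneg_right (hslope t ht) (rpow_nonneg ht.le (r - 1))
    rw [mul_assoc, hcancel] at this
    linarith

theorem stmt_8_general (r μ t' : ℝ) (hr : 0 < r) (hr1 : r < 1) (ht' : 0 < t')
    (h : μ ≥ (1 / r) * (t' - ((1 - r) / (2 - r)) * t') *
        (((1 - r) / (2 - r)) * t') ^ (1 - r)) :
    MonotoneOn (fun t : ℝ => μ * t ^ r + (1 / 2) * (t - t') ^ 2) (Set.Ici 0) ∧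
      ∀ t ∈ Set.Ici (0 : ℝ),
        μ * (0 : ℝ) ^ r + (1 / 2) * ((0 : ℝ) - t') ^ 2 ≤
          μ * t ^ r + (1 / 2) * (t - t') ^ 2 := by
  have hmax : (t' - (1 - r) / (2 - r) * t') * ((1 - r) / (2 - r) * t') ^ (1 - r) ≤ μ * r := by
    rw [ge_iff_le, one_div, inv_mul_eq_div, div_mul_eq_mul_div, div_le_iff₀ hr] at h
    exact h
  have hmono := monotoneOn_mul_rpow_add_half_sq hr.le fun t ht =>
    (sub_mul_rpow_one_sub_le hr.le hr1 ht' ht.le).trans hmax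
  exact ⟨hmono, fun t ht => hmono self_mem_Ici ht ht⟩

/-- If `μ ≥ (1/r)(t' - t₀) t₀^(1-r)` with `t₀ = ((1-r)/(2-r)) t'`, then
`E_r` is nondecreasing on `[0, ∞)` and `t = 0` is a global minimizer there. -/
theorem stmt_8 (r μ t' : ℝ) (hr : 0 < r) (hr1 : r < 1) (hμ : 0 < μ) (ht' : 0 < t')
    (h : μ ≥ (1 / r) * (t' - ((1 - r) / (2 - r)) * t') *
        (((1 - r) / (2 - r)) * t') ^ (1 - r)) :
    MonotoneOn (fun t : ℝ => μ * t ^ r + (1 / 2) * (t - t') ^ 2) (Set.Ici 0) ∧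
      ∀ t ∈ Set.Ici (0 : ℝ),
        μ * (0 : ℝ) ^ r + (1 / 2) * ((0 : ℝ) - t') ^ 2 ≤
          μ * t ^ r + (1 / 2) * (t - t') ^ 2 :=
  stmt_8_general r μ t' hr hr1 ht' h
end
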